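/- arXiv:2304.14481 — 2 statements merged into one kernel-verified Lean document; each statement's English description precedes it below -/
import Mathlib

section
/- Let V and E be finite types and let s, t : E → V be the source and target maps of a finite directed multigraph. Let w : E → ℤ be an integer weight function such that for every directed cycle — i.e., every nonempty finite sequence of edges e₀, e₁, …, e_{k} with t(eᵢ) = s(e_{i+1}) for all i < k and t(e_k) = s(e₀) — the total weight w(e₀) + w(e₁) + ⋯ + w(e_k) is nonnegative. Then there exists a function f : V → ℚ such that for every edge e one has (w(e) : ℚ) + f(t(e)) − f(s(e)) ≥ 0. (Equivalently: an integral 1-cochain on a finite directed graph that evaluates nonnegatively on every directed cycle is cohomologous, over ℚ, to a nonnegative 1-cochain, where the coboundary of f : V → ℚ assigns to an edge e the value f(t(e)) − f(s(e)).) -/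
open List

section Aux

variable {V E : Type*} (s t : E → V) (w : E → ℤ)

private lemma wt_map_sum (l : List E) :
    (l.map w).sum = ∑ i : Fin l.length, w l[(i : ℕ)] := by
  rw [← List.ofFn_getElem_eq_map l w, List.sum_ofFn]

/-- Cycles (as lists) have nonnegative weight. -/
private lemma cyc_nonneg
    (hcyc : ∀ (k : ℕ) (c : Fin (k + 1) → E),
      (∀ i : Fin (k + 1), t (c i) = s (c (i + 1))) → 0 ≤ ∑ i, w (c i))
    (l : List E) (hl : l ≠ []) (hch : l.Chain' (fun e e' => t e = s e'))
    (hcl : t (l.getLast hl) = s (l.head hl)) :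
    0 ≤ (l.map w).sum := by
  obtain ⟨k, hk⟩ : ∃ k, l.length = k + 1 :=
    ⟨l.length - 1, by have := List.length_pos_iff.mpr hl; omega⟩
  have hget := List.isChain_iff_getElem.mp hch
  have hlt : ∀ i : Fin (k + 1), (i : ℕ) < l.length := fun i => by omega
  set c : Fin (k + 1) → E := fun i => l[(i : ℕ)]'(hlt i) with hc
  have h1 : ∀ i : Fin (k + 1), t (c i) = s (c (i + 1)) := by
    intro i
    have hvadd := Fin.val_add_one i
    by_cases h : i = Fin.last k
    · rw [if_pos h] at hvadd
      have h0 : c (i + 1) = l.head hl := by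
        simp only [hc, hvadd]
        exact (List.head_eq_getElem_zero hl).symm
      have hk' : c i = l.getLast hl := by
        simp only [hc, h, Fin.val_last]
        rw [List.getLast_eq_getElem]
        congr 1
        omega
      rw [h0, hk', hcl]
    · rw [if_neg h] at hvadd
      have hik : (i : ℕ) < k := by
        have := Fin.val_lt_last h
        simpa using this
      have := hget (i : ℕ) (by omega)
      simp only [hc, hvadd]
      convert this using 2
  have := hcyc k c h1
  calc (0 : ℤ) ≤ ∑ i : Fin (k + 1), w (c i) := this
    _ = (l.map w).sum := by
        rw [wt_map_sum]
        rw [← Fin.sum_congr' (fun i : Fin l.length => w l[(i : ℕ)]) hk.symm]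
        apply Finset.sum_congr rfl
        intro i _
        rfl

/-- Every walk can be shortened to a walk of length `≤ card V` with the same
endpoint (in the sense of `getLast?.map t`) and no larger weight. -/
private lemma reduce [Fintype V]
    (hc0 : ∀ (l : List E) (hl : l ≠ []), l.Chain' (fun e e' => t e = s e') →
      t (l.getLast hl) = s (l.head hl) → 0 ≤ (l.map w).sum) :
    ∀ (n : ℕ) (l : List E), l.length ≤ n → l.Chain' (fun e e' => t e = s e') →
      ∃ l' : List E, l'.Chain' (fun e e' => t e = s e') ∧
        l'.length ≤ Fintype.card V ∧ (l'.map w).sum ≤ (l.map w).sum ∧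
        l'.getLast?.map t = l.getLast?.map t := by
  intro n
  induction n with
  | zero =>
    intro l hl hch
    have : l = [] := List.length_eq_zero_iff.mp (by omega)
    exact ⟨l, hch, by simp [this], le_rfl, rfl⟩
  | succ n ih =>
    intro l hl hch
    by_cases hlen : l.length ≤ Fintype.card V
    · exact ⟨l, hch, hlen, le_rfl, rfl⟩
    · push_neg at hlen
      obtain ⟨i, j, hne, hijt⟩ :=
        Fintype.exists_ne_map_eq_of_card_lt (fun i : Fin l.length => t l[(i : ℕ)])
          (by simpa using hlen)
      -- wlog i < j
      wlog hij : (i : ℕ) < (j : ℕ) generalizing i j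
      · have hne' : (i : ℕ) ≠ (j : ℕ) := fun h => hne (Fin.ext h)
        exact this j i hne.symm hijt.symm (by omega)
      clear hne
      set a : List E := l.take ((i : ℕ) + 1) with ha
      set b : List E := (l.drop ((i : ℕ) + 1)).take ((j : ℕ) - (i : ℕ)) with hb
      set c : List E := l.drop ((j : ℕ) + 1) with hcdef
      have hbc : b ++ c = l.drop ((i : ℕ) + 1) := by
        rw [hb, hcdef]
        have : (j : ℕ) + 1 = (i : ℕ) + 1 + ((j : ℕ) - (i : ℕ)) := by omega
        rw [this, List.drop_take_append_drop]
      have hdecomp : l = a ++ (b ++ c) := by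
        rw [hbc, ha, List.take_append_drop]
      have hla : a.length = (i : ℕ) + 1 := by
        rw [ha, List.length_take]; omega
      have hlb : b.length = (j : ℕ) - (i : ℕ) := by
        rw [hb, List.length_take, List.length_drop]; omega
      have hlc : c.length = l.length - ((j : ℕ) + 1) := by
        rw [hcdef, List.length_drop]
      have hbne : b ≠ [] := by
        intro h; rw [h] at hlb; simp at hlb; omega
      have hane : a ≠ [] := by
        intro h; rw [h] at hla; simp at hla
      -- getElem identifications
      have hagl : a.getLast? = some l[(i : ℕ)] := by
        rw [List.getLast?_eq_getElem?, hla, Nat.add_sub_cancel, ha,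
          List.getElem?_take_of_lt (Nat.lt_succ_self _),
          List.getElem?_eq_getElem i.isLt]
      have hbh : b.head? = some l[(i : ℕ) + 1] := by
        rw [List.head?_eq_getElem?, hb, List.getElem?_take_of_lt (by omega),
          List.getElem?_drop]
        exact List.getElem?_eq_getElem (by omega)
      have hbgl : b.getLast? = some l[(j : ℕ)] := by
        rw [List.getLast?_eq_getElem?, hlb, hb, List.getElem?_take_of_lt (by omega),
          List.getElem?_drop]
        have hidx : (i : ℕ) + 1 + ((j : ℕ) - (i : ℕ) - 1) = (j : ℕ) := by omega
        rw [hidx, List.getElem?_eq_getElem j.isLt]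
      have hch' := hch
      rw [hdecomp, List.Chain', List.isChain_append] at hch'
      obtain ⟨hcha, hchbc, hlink⟩ := hch'
      rw [List.isChain_append] at hchbc
      obtain ⟨hchb, hchc, hlink2⟩ := hchbc
      have hbch : (b ++ c).head? = some l[(i : ℕ) + 1] := by
        rw [List.head?_append_of_ne_nil _ hbne]
        exact hbh
      -- the removed part b is a cycle of nonnegative weight
      have hbcyc : 0 ≤ (b.map w).sum := by
        apply hc0 b hbne hchb
        have h1 : t (b.getLast hbne) = t l[(j : ℕ)] := by
          have := hbgl
          rw [List.getLast?_eq_getLast hbne] at this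
          rw [Option.some.injEq] at this
          rw [this]
        have h2 : s (b.head hbne) = s l[(i : ℕ) + 1] := by
          have := hbh
          rw [List.head?_eq_head hbne] at this
          rw [Option.some.injEq] at this
          rw [this]
        rw [h1, h2]
        have h3 : t l[(i : ℕ)] = s l[(i : ℕ) + 1] :=
          hlink _ (by rw [hagl]; rfl) _ (by rw [hbch]; rfl)
        rw [← h3, ← hijt]
      -- a ++ c is a shorter walk
      have hchac : (a ++ c).Chain' (fun e e' => t e = s e') := by
        rw [List.Chain', List.isChain_append]
        refine ⟨hcha, hchc, ?_⟩
        intro x hx y hy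
        rw [hagl, Option.mem_def, Option.some.injEq] at hx
        subst hx
        have hcne : c ≠ [] := by
          intro h; rw [h] at hy; simp at hy
        have hch2 : c.head? = some (c.head hcne) := List.head?_eq_head hcne
        rw [hch2, Option.mem_def, Option.some.injEq] at hy
        subst hy
        have h4 : t (b.getLast hbne) = s (c.head hcne) :=
          hlink2 _ (by rw [List.getLast?_eq_getLast hbne]; rfl) _ (by rw [hch2]; rfl)
        have h5 : t (b.getLast hbne) = t l[(j : ℕ)] := by
          have := hbgl
          rw [List.getLast?_eq_getLast hbne, Option.some.injEq] at this
          rw [this]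
        rw [hijt, ← h5, h4]
      have hwac : ((a ++ c).map w).sum ≤ (l.map w).sum := by
        rw [hdecomp]
        simp only [List.map_append, List.sum_append]
        linarith [hbcyc]
      have hglac : (a ++ c).getLast?.map t = l.getLast?.map t := by
        by_cases hcne : c = []
        · rw [hcne, List.append_nil]
          have hj1 : (j : ℕ) + 1 ≥ l.length := by
            rw [hcne] at hlc; simp only [List.length_nil] at hlc; omega
          have hlgl : l.getLast? = some l[(j : ℕ)] := by
            have hidx : l.length - 1 = (j : ℕ) := by omega
            rw [List.getLast?_eq_getElem?, hidx, List.getElem?_eq_getElem j.isLt]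
          rw [hagl, hlgl]
          simp [hijt]
        · rw [List.getLast?_append_of_ne_nil _ hcne]
          conv_rhs => rw [hdecomp]
          rw [← List.append_assoc, List.getLast?_append_of_ne_nil _ hcne]
      have hlenac : (a ++ c).length ≤ n := by
        rw [List.length_append, hla, hlc]
        omega
      obtain ⟨l', h1, h2, h3, h4⟩ := ih (a ++ c) hlenac hchac
      exact ⟨l', h1, h2, le_trans h3 hwac, by rw [h4, hglac]⟩

private lemma wt_lower [Fintype E] (l : List E) :
    -((l.length : ℤ) * ∑ e : E, |w e|) ≤ (l.map w).sum := by
  induction l with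
  | nil => simp
  | cons e l ih =>
    simp only [List.map_cons, List.sum_cons, List.length_cons]
    have h1 : |w e| ≤ ∑ e : E, |w e| :=
      Finset.single_le_sum (fun e _ => abs_nonneg (w e)) (Finset.mem_univ e)
    have h2 : -|w e| ≤ w e := neg_abs_le _
    push_cast
    linarith

end Aux

/-- An integral 1-cochain on a finite directed multigraph that evaluates
nonnegatively on every directed cycle is cohomologous, over ℚ, to a
nonnegative 1-cochain. A directed cycle is encoded as a function
`c : Fin (k+1) → E` with `t (c i) = s (c (i+1))` for all `i` (indices
taken cyclically in `Fin (k+1)`). -/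
theorem nonneg_cocycle_representative
    {V E : Type*} [Fintype V] [Fintype E]
    (s t : E → V) (w : E → ℤ)
    (hcyc : ∀ (k : ℕ) (c : Fin (k + 1) → E),
      (∀ i : Fin (k + 1), t (c i) = s (c (i + 1))) → 0 ≤ ∑ i, w (c i)) :
    ∃ f : V → ℚ, ∀ e : E, 0 ≤ (w e : ℚ) + f (t e) - f (s e) := by
  classical
  have hc0 : ∀ (l : List E) (hl : l ≠ []), l.Chain' (fun e e' => t e = s e') →
      t (l.getLast hl) = s (l.head hl) → 0 ≤ (l.map w).sum :=
    fun l hl hch hcl => cyc_nonneg s t w hcyc l hl hch hcl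
  set M : ℤ := ∑ e : E, |w e| with hM
  have hM0 : 0 ≤ M := Finset.sum_nonneg fun e _ => abs_nonneg (w e)
  set S : V → Set ℤ := fun v =>
    insert 0 {x | ∃ l : List E, l ≠ [] ∧ l.Chain' (fun e e' => t e = s e') ∧
      l.getLast?.map t = some v ∧ x = (l.map w).sum} with hS
  have hSne : ∀ v, (S v).Nonempty := fun v => ⟨0, Set.mem_insert 0 _⟩
  have hSbdd : ∀ v, BddBelow (S v) := by
    intro v
    refine ⟨-((Fintype.card V : ℤ) * M), ?_⟩
    rintro x (rfl | ⟨l, hl, hch, hgl, rfl⟩)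
    · simp; positivity
    · obtain ⟨l', h1, h2, h3, _⟩ :=
        reduce s t w hc0 l.length l le_rfl hch
      have h5 := wt_lower w l'
      have h6 : (l'.length : ℤ) * M ≤ (Fintype.card V : ℤ) * M := by
        apply mul_le_mul_of_nonneg_right _ hM0
        exact_mod_cast h2
      linarith
  set g : V → ℤ := fun v => sInf (S v) with hg
  have key : ∀ e : E, g (t e) ≤ g (s e) + w e := by
    intro e
    have hmem : g (s e) ∈ S (s e) := Int.csInf_mem (hSne _) (hSbdd _)
    rcases hmem with h0 | ⟨l, hl, hch, hgl, hwl⟩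
    · -- g (s e) = 0; use the walk [e]
      have : g (t e) ≤ w e := by
        apply csInf_le (hSbdd _)
        exact Or.inr ⟨[e], by simp, List.isChain_singleton e, by simp, by simp⟩
      rw [h0] at *
      omega
    · -- extend l by e
      have hch2 : (l ++ [e]).Chain' (fun e e' => t e = s e') := by
        rw [List.Chain', List.isChain_append]
        refine ⟨hch, List.isChain_singleton e, ?_⟩
        intro x hx y hy
        simp only [List.head?_cons, Option.mem_def, Option.some.injEq] at hy
        subst hy
        have : (l.getLast?.map t) = some (t x) := by
          rw [Option.mem_def] at hx
          rw [hx]; rfl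
        rw [hgl] at this
        exact ((Option.some.injEq _ _).mp this).symm
      have hmem2 : (l.map w).sum + w e ∈ S (t e) := by
        refine Or.inr ⟨l ++ [e], by simp, hch2, ?_, by simp⟩
        simp
      have h7 := csInf_le (hSbdd (t e)) hmem2
      rw [hwl]
      exact h7
  refine ⟨fun v => -((g v : ℤ) : ℚ), fun e => ?_⟩
  have := key e
  have hq : ((g (t e) : ℤ) : ℚ) ≤ ((g (s e) : ℤ) : ℚ) + (w e : ℚ) := by
    exact_mod_cast this
  show (0 : ℚ) ≤ (w e : ℚ) + -((g (t e) : ℤ) : ℚ) - -((g (s e) : ℤ) : ℚ)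
  linarith
end

section
/- Let r be a binary relation on a type α satisfying the one-step diamond property: whenever r a b and r a c, either b = c or there exists d with r b d and r c d. Call an element x normal if there is no y with r x y, and call a finite sequence x₀, x₁, …, x_m with r xᵢ x_{i+1} for all i < m an r-chain of length m from x₀. Suppose a₀ ∈ α is accessible with respect to the reversed relation (equivalently, there is no infinite r-chain starting at a₀). Then any two r-chains starting at a₀ and ending at normal elements have the same length and the same final element. -/
/-!
Induction on accessibility. Two chains from `a` to normal forms whose first steps
go to different elements `b` and `c` are reconciled through a common successor `d` of `b` and
`c`: any chain from `d` to a normal form (one exists by accessibility) extends to chains from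
`b` and from `c`, and the induction hypothesis at `b` and at `c` compares each given chain with
the corresponding extension.
-/

section

variable {α : Type*} (r : α → α → Prop)

inductive ReachesNormalIn : ℕ → α → α → Prop
  | normal {a : α} : (∀ y, ¬ r a y) → ReachesNormalIn 0 a a
  | step {n : ℕ} {a b c : α} : r a b → ReachesNormalIn n b c → ReachesNormalIn (n + 1) a c

variable {r}

theorem reachesNormalIn_of_chain {m : ℕ} {x : ℕ → α} (hx : ∀ i < m, r (x i) (x (i + 1)))
    (hnorm : ∀ y, ¬ r (x m) y) : ReachesNormalIn r m (x 0) (x m) := by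
  induction m generalizing x with
  | zero => exact .normal hnorm
  | succ m ih =>
    exact .step (hx 0 m.succ_pos)
      (ih (x := fun i => x (i + 1)) (fun i hi => hx (i + 1) (by omega)) hnorm)

theorem exists_reachesNormalIn_of_acc {a : α} (hacc : Acc (flip r) a) :
    ∃ n b, ReachesNormalIn r n a b := by
  induction hacc with
  | intro a _ ih =>
    by_cases hred : ∃ b, r a b
    · obtain ⟨b, hab⟩ := hred
      obtain ⟨n, c, hbc⟩ := ih b hab
      exact ⟨n + 1, c, .step hab hbc⟩
    · exact ⟨0, a, .normal (not_exists.mp hred)⟩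

theorem ReachesNormalIn.unique
    (hdiamond : ∀ a b c, r a b → r a c → b = c ∨ ∃ d, r b d ∧ r c d)
    {a : α} (hacc : Acc (flip r) a) {n₁ n₂ : ℕ} {b₁ b₂ : α}
    (h₁ : ReachesNormalIn r n₁ a b₁) (h₂ : ReachesNormalIn r n₂ a b₂) :
    n₁ = n₂ ∧ b₁ = b₂ := by
  induction hacc generalizing n₁ n₂ b₁ b₂ with
  | intro a hacc ih =>
    cases h₁ with
    | normal hnorm₁ =>
      cases h₂ with
      | normal => exact ⟨rfl, rfl⟩
      | step hac => exact (hnorm₁ _ hac).elim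
    | @step k₁ _ c₁ _ hac₁ h₁ =>
      cases h₂ with
      | normal hnorm₂ => exact (hnorm₂ _ hac₁).elim
      | @step k₂ _ c₂ _ hac₂ h₂ =>
        rcases hdiamond a c₁ c₂ hac₁ hac₂ with rfl | ⟨d, hd₁, hd₂⟩
        · obtain ⟨rfl, rfl⟩ := ih c₁ hac₁ h₁ h₂
          exact ⟨rfl, rfl⟩
        · obtain ⟨k, e, hde⟩ := exists_reachesNormalIn_of_acc ((hacc c₁ hac₁).inv hd₁)
          obtain ⟨rfl, rfl⟩ := ih c₁ hac₁ h₁ (.step hd₁ hde)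
          obtain ⟨rfl, rfl⟩ := ih c₂ hac₂ h₂ (.step hd₂ hde)
          exact ⟨rfl, rfl⟩

end

/-- If a relation `r` satisfies the one-step diamond property and `a₀` is
accessible for the reversed relation (no infinite `r`-chains from `a₀`), then
any two `r`-chains starting at `a₀` and ending at elements with no
`r`-successor have the same length and the same final element. -/
theorem maximal_chains_unique
    {α : Type*} (r : α → α → Prop)
    (hdiamond : ∀ a b c, r a b → r a c → b = c ∨ ∃ d, r b d ∧ r c d)
    (a₀ : α) (hacc : Acc (fun b a => r a b) a₀)
    (m₁ m₂ : ℕ) (x₁ x₂ : ℕ → α)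
    (hx₁0 : x₁ 0 = a₀) (hx₂0 : x₂ 0 = a₀)
    (hx₁ : ∀ i < m₁, r (x₁ i) (x₁ (i + 1)))
    (hx₂ : ∀ i < m₂, r (x₂ i) (x₂ (i + 1)))
    (hnorm₁ : ∀ y, ¬ r (x₁ m₁) y)
    (hnorm₂ : ∀ y, ¬ r (x₂ m₂) y) :
    m₁ = m₂ ∧ x₁ m₁ = x₂ m₂ := by
  have h₁ := reachesNormalIn_of_chain hx₁ hnorm₁
  have h₂ := reachesNormalIn_of_chain hx₂ hnorm₂
  rw [hx₁0] at h₁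
  rw [hx₂0] at h₂
  exact h₁.unique hdiamond hacc h₂
end
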